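/- There exists a function C : ℕ × ℕ × ℕ → ℕ such that the following holds. Let Δ, k, R be positive integers and let G be a connected finite simple graph on N > C(Δ,k,R) vertices in which every vertex has degree exactly Δ and whose closed neighborhoods B_i(1) are pairwise distinct. Define Q†_{nn} = ∑_{i∈V} ∏_{j∈B_i(1)} s†_j (the operators s†_j commute, so this product is well defined). For every k-local Hamiltonian H of range R with respect to G such that for every natural number p with (Q†_{nn})^p |0̄⟩ ≠ 0 there is E_p ∈ ℂ with H (Q†_{nn})^p |0̄⟩ = E_p (Q†_{nn})^p |0̄⟩, there exist Ω, ω ∈ ℂ with E_p = Ω + ω·p for every such p. -/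

import Mathlib

/-!
The tower states `W p = (Q†_{nn})^p |0̄⟩` are eigenvectors of `H`, so the iterated commutators
`ad^c H = [⋯[H, Q†_{nn}], ⋯, Q†_{nn}]` act on them through the finite differences `δ^c E` of the
energies: `ad^c H (W p) = (δ^c E p) • W (p + c)`. Each commutator with `Q†_{nn}` enlarges the
support of the local terms of `H` by at most `Δ` sites and their diameter by at most `2`.

Every configuration in `W p` has exactly `p (Δ + 1)` occupied sites, while a term on at most
`k + c Δ` sites changes fewer than the `c (Δ + 1)` sites needed to pass from `W p` to
`W (p + c)` when `c > k`; hence `δ^c E = 0` for `c > k`. For `2 ≤ c ≤ k`, the vacuum is sent by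
`ad^c H` only to configurations whose occupied sites lie in a set of small diameter, whereas
`W c` has positive weight on `c` closed neighbourhoods that are pairwise far apart. Such
neighbourhoods exist once `N > k (Δ + 1)^(R - 1 + 2k)` (a greedy choice, since balls of radius
`r` have at most `(Δ + 1)^r` vertices), and give `δ^c E 0 = 0`. Downward induction on `c`
through `δ^c E (p + 1) = δ^(c+1) E p + δ^c E p` then gives `δ^2 E = 0` along the tower, so `E`
is affine.
-/

open scoped BigOperators
set_option linter.unusedSectionVars false

noncomputable section

/-- The state space of a collection of qubits indexed by `V`: the complex vector space of
functions from configurations `V → Bool` to `ℂ`. -/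
abbrev QState (V : Type*) := (V → Bool) → ℂ

section Defs

variable {V : Type*} [Fintype V] [DecidableEq V]

/-- The standard basis vector associated to the configuration `f`. -/
def basisVec (f : V → Bool) : QState V := fun g => if g = f then 1 else 0

/-- The creation operator `s†_i` at site `i`. -/
def creOp (i : V) : Module.End ℂ (QState V) where
  toFun ψ := fun g => if g i = true then ψ (Function.update g i false) else 0
  map_add' ψ φ := by funext g; by_cases h : g i = true <;> simp [h]
  map_smul' a ψ := by funext g; by_cases h : g i = true <;> simp [h]

/-- The annihilation operator `s_i` at site `i`. -/
def annOp (i : V) : Module.End ℂ (QState V) where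
  toFun ψ := fun g => if g i = false then ψ (Function.update g i true) else 0
  map_add' ψ φ := by funext g; by_cases h : g i = false <;> simp [h]
  map_smul' a ψ := by funext g; by_cases h : g i = false <;> simp [h]

@[simp] lemma creOp_apply (i : V) (ψ : QState V) (g : V → Bool) :
    creOp i ψ g = if g i = true then ψ (Function.update g i false) else 0 := rfl

variable (V)

/-- The vacuum `|0̄⟩`: the basis vector of the all-false configuration. -/
def vac : QState V := basisVec (fun _ => false)

/-- The total raising operator `S† = ∑ i, s†_i`. -/
def Sdag : Module.End ℂ (QState V) := ∑ i : V, creOp i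

/-- The number operator `N̂ = ∑ i, s†_i s_i`. -/
def numOp : Module.End ℂ (QState V) := ∑ i : V, creOp i * annOp i

/-- The unnormalized Dicke state `|W^p⟩ = (S†)^p |0̄⟩`. -/
def WState (p : ℕ) : QState V := ((Sdag V) ^ p) (vac V)

variable {V}

/-- Creation operators at different sites commute. -/
lemma creOp_commute (i j : V) : Commute (creOp (V := V) i) (creOp j) := by
  rcases eq_or_ne i j with rfl | hij
  · exact Commute.refl _
  · show creOp i * creOp j = creOp j * creOp i
    refine LinearMap.ext fun ψ => funext fun g => ?_
    simp only [Module.End.mul_apply, creOp_apply]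
    by_cases hi : g i = true <;> by_cases hj : g j = true <;>
      simp [hi, hj, Function.update_of_ne hij, Function.update_of_ne hij.symm,
        Function.update_comm hij]

/-- The product `∏_{j ∈ Y} s†_j` of creation operators over a finite set `Y` of sites
(the operators commute, so the product is well defined; the empty product is the identity). -/
def creProd (Y : Finset V) : Module.End ℂ (QState V) :=
  Y.noncommProd creOp fun a _ b _ _ => creOp_commute a b

/-- The operator `O` is supported on the set of sites `X`. -/
def SupportedOn (O : Module.End ℂ (QState V)) (X : Set V) : Prop :=
  (∀ f g : V → Bool, (∃ i ∉ X, f i ≠ g i) → O (basisVec f) g = 0) ∧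
  (∀ f f' g g' : V → Bool,
    (∀ i ∈ X, f i = f' i) → (∀ i ∈ X, g i = g' i) →
    (∀ i ∉ X, f i = g i) → (∀ i ∉ X, f' i = g' i) →
    O (basisVec f) g = O (basisVec f') g')

/-- An operator is `k`-local if it is a finite sum of operators each supported
on a subset of at most `k` sites. -/
def IsKLocal (k : ℕ) (O : Module.End ℂ (QState V)) : Prop :=
  ∃ (n : ℕ) (h : Fin n → Module.End ℂ (QState V)) (X : Fin n → Finset V),
    (∀ t, SupportedOn (h t) ↑(X t)) ∧ (∀ t, (X t).card ≤ k) ∧ O = ∑ t, h t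

/-- Vertices `i` and `j` are within distance `r` in the graph `G`:
they are joined by a walk of length at most `r`. -/
def WithinDist (G : SimpleGraph V) (r : ℕ) (i j : V) : Prop :=
  ∃ w : G.Walk i j, w.length ≤ r

/-- The ball of radius `r` around vertex `i` in the graph `G`. -/
def gball (G : SimpleGraph V) (i : V) (r : ℕ) : Set V := {j | WithinDist G r i j}

/-- `diam(X) ≤ R` with respect to `G`: every two vertices of `X` are within distance `R - 1`. -/
def GDiamLE (G : SimpleGraph V) (X : Finset V) (R : ℕ) : Prop :=
  ∀ i ∈ X, ∀ j ∈ X, WithinDist G (R - 1) i j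

/-- `H` is a Hamiltonian of range `R` with respect to the graph `G`: a finite sum over
nonempty subsets `X` with `diam(X) ≤ R` of operators supported on `X`. -/
def IsRangeHam (G : SimpleGraph V) (R : ℕ) (H : Module.End ℂ (QState V)) : Prop :=
  ∃ h : Finset V → Module.End ℂ (QState V),
    (∀ X, SupportedOn (h X) ↑X) ∧
    (∀ X, h X ≠ 0 → X.Nonempty ∧ GDiamLE G X R) ∧
    H = ∑ X : Finset V, h X

/-- `H` is a `k`-local Hamiltonian of range `R` with respect to the graph `G`. -/
def IsKLocalRangeHam (G : SimpleGraph V) (k R : ℕ) (H : Module.End ℂ (QState V)) : Prop :=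
  ∃ h : Finset V → Module.End ℂ (QState V),
    (∀ X, SupportedOn (h X) ↑X) ∧
    (∀ X, h X ≠ 0 → X.Nonempty ∧ GDiamLE G X R ∧ X.card ≤ k) ∧
    H = ∑ X : Finset V, h X

/-- An invertible linear operator `M` is `δ`-locality-preserving with respect to `G` if
conjugation by `M` or `M⁻¹` increases the range of any operator by at most `δ`. -/
def LocalityPreserving (G : SimpleGraph V) (δ : ℕ) (M : QState V ≃ₗ[ℂ] QState V) : Prop :=
  ∀ R : ℕ, 0 < R → ∀ O : Module.End ℂ (QState V), IsRangeHam G R O →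
    IsRangeHam G (R + δ) (M.toLinearMap ∘ₗ O ∘ₗ M.symm.toLinearMap) ∧
    IsRangeHam G (R + δ) (M.symm.toLinearMap ∘ₗ O ∘ₗ M.toLinearMap)

end Defs

section Chain

/-- Distance between two sites of the open chain `{0, …, N-1}`. -/
def chainDist {N : ℕ} (i j : Fin N) : ℕ := ((i : ℤ) - (j : ℤ)).natAbs

/-- `diam(X) ≤ R` on the open chain: `diam(X) = 1 + max |i - j|`. -/
def ChainDiamLE {N : ℕ} (X : Finset (Fin N)) (R : ℕ) : Prop :=
  ∀ i ∈ X, ∀ j ∈ X, chainDist i j + 1 ≤ R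

/-- `H` is a Hamiltonian of range `R` on the open chain of `N` sites. -/
def IsChainRangeHam {N : ℕ} (R : ℕ) (H : Module.End ℂ (QState (Fin N))) : Prop :=
  ∃ h : Finset (Fin N) → Module.End ℂ (QState (Fin N)),
    (∀ X, SupportedOn (h X) ↑X) ∧
    (∀ X, h X ≠ 0 → X.Nonempty ∧ ChainDiamLE X R) ∧
    H = ∑ X : Finset (Fin N), h X

/-- `H` is a `k`-local Hamiltonian of range `R` on the open chain of `N` sites. -/
def IsChainKLocalRangeHam {N : ℕ} (k R : ℕ) (H : Module.End ℂ (QState (Fin N))) : Prop :=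
  ∃ h : Finset (Fin N) → Module.End ℂ (QState (Fin N)),
    (∀ X, SupportedOn (h X) ↑X) ∧
    (∀ X, h X ≠ 0 → X.Nonempty ∧ ChainDiamLE X R ∧ X.card ≤ k) ∧
    H = ∑ X : Finset (Fin N), h X

end Chain

end
/-- The nearest-neighbor quasiparticle creation operator
`Q†_{nn} = ∑ i, ∏_{j ∈ B_i(1)} s†_j`, where `B_i(1) = {i} ∪ (neighbors of i)`. -/
noncomputable def Qnn {V : Type*} [Fintype V] [DecidableEq V]
    (G : SimpleGraph V) [DecidableRel G.Adj] : Module.End ℂ (QState V) :=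
  ∑ i : V, creProd (insert i (G.neighborFinset i))

section EigenvectorTower

open scoped fwdDiff

variable {R M : Type*} [CommRing R] [AddCommGroup M] [Module R M]

lemma pow_apply_ne_zero_of_le {Q : Module.End R M} {w : M} {p q : ℕ} (hpq : p ≤ q)
    (h : (Q ^ q) w ≠ 0) : (Q ^ p) w ≠ 0 := by
  obtain ⟨d, rfl⟩ := Nat.exists_eq_add_of_le hpq
  intro hp
  rw [add_comm, pow_add, Module.End.mul_apply, hp, map_zero] at h
  exact h rfl

lemma iterate_fwdDiff_succ_apply (e : ℕ → R) (c p : ℕ) :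
    (Δ_[1])^[c + 1] e p = (Δ_[1])^[c] e (p + 1) - (Δ_[1])^[c] e p := by
  rw [Function.iterate_succ_apply', fwdDiff]

lemma iterate_commutator_apply_pow_apply {A Q : Module.End R M} {w : M} {E : ℕ → R}
    (hE : ∀ p, (Q ^ p) w ≠ 0 → A ((Q ^ p) w) = E p • (Q ^ p) w) (c p : ℕ)
    (hW : (Q ^ (p + c)) w ≠ 0) :
    ((fun X => X * Q - Q * X)^[c] A) ((Q ^ p) w) = (Δ_[1])^[c] E p • (Q ^ (p + c)) w := by
  induction c generalizing p with
  | zero => exact hE p hW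
  | succ c ih =>
    have hQ : ∀ n, Q ((Q ^ n) w) = (Q ^ (n + 1)) w := fun n => by
      rw [pow_succ', Module.End.mul_apply]
    rw [Function.iterate_succ_apply', LinearMap.sub_apply, Module.End.mul_apply,
      Module.End.mul_apply, hQ, ih (p + 1) (by rwa [add_right_comm]),
      ih p (pow_apply_ne_zero_of_le (by omega) hW), map_smul, hQ, add_right_comm, ← sub_smul,
      iterate_fwdDiff_succ_apply, add_assoc]

lemma iterate_fwdDiff_eq_zero_of_apply_eq_zero {ι S : Type*} [CommRing S] [NoZeroDivisors S]
    {A Q : Module.End S (ι → S)} {w : ι → S} {E : ℕ → S}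
    (hE : ∀ p, (Q ^ p) w ≠ 0 → A ((Q ^ p) w) = E p • (Q ^ p) w) {c p : ℕ} {g : ι}
    (hg : (Q ^ (p + c)) w g ≠ 0) (h : ((fun X => X * Q - Q * X)^[c] A) ((Q ^ p) w) g = 0) :
    (Δ_[1])^[c] E p = 0 := by
  have hW : (Q ^ (p + c)) w ≠ 0 := fun hW => hg (by rw [hW, Pi.zero_apply])
  rw [iterate_commutator_apply_pow_apply hE c p hW, Pi.smul_apply, smul_eq_mul] at h
  exact (mul_eq_zero.mp h).resolve_right hg

lemma iterate_fwdDiff_eq_zero_of_apply_zero {e : ℕ → R} {m : ℕ → Prop}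
    (hm : ∀ p, m (p + 1) → m p) (K : ℕ)
    (hzero : ∀ c, 2 ≤ c → m c → (Δ_[1])^[c] e 0 = 0)
    (hlarge : ∀ c, K < c → ∀ p, m (p + c) → (Δ_[1])^[c] e p = 0) :
    ∀ c, 2 ≤ c → ∀ p, m (p + c) → (Δ_[1])^[c] e p = 0 := by
  -- downward induction on `c`, with `d` bounding `K + 1 - c`
  suffices ∀ d c, 2 ≤ c → K < c + d → ∀ p, m (p + c) → (Δ_[1])^[c] e p = 0 from
    fun c hc => this K c hc (by omega)
  intro d
  induction d with
  | zero => exact fun c _ hc => hlarge c hc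
  | succ d ihd =>
    intro c hc hcd p
    induction p with
    | zero => exact fun h => hzero c hc (by simpa using h)
    | succ p ihp =>
      intro h
      have h1 := ihd (c + 1) (by omega) (by omega) p (by rwa [← add_assoc, add_right_comm])
      rwa [iterate_fwdDiff_succ_apply, ihp (hm _ (by rwa [add_right_comm])), sub_zero] at h1

lemma exists_affine_of_fwdDiff_fwdDiff_eq_zero {e : ℕ → R} {m : ℕ → Prop}
    (hm : ∀ p, m (p + 1) → m p) (h : ∀ p, m (p + 2) → (Δ_[1])^[2] e p = 0) :
    ∃ a b : R, ∀ p, m p → e p = a + b * p := by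
  refine ⟨e 0, e 1 - e 0, fun p => ?_⟩
  induction p using Nat.strong_induction_on with
  | _ p ih =>
    match p with
    | 0 => simp
    | 1 => simp
    | p + 2 =>
      intro hp
      have h2 := h p hp
      simp only [iterate_fwdDiff_succ_apply, Function.iterate_zero, id] at h2
      rw [ih p (by omega) (hm _ (hm _ hp)), ih (p + 1) (by omega) (hm _ hp)] at h2
      push_cast at h2 ⊢
      linear_combination h2

end EigenvectorTower

section Configurations

variable {V : Type*} [Fintype V]

lemma basisVec_eq_single (f : V → Bool) : basisVec f = Pi.single f 1 := by
  funext g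
  simp [basisVec, Pi.single_apply]

lemma eq_false_of_vac_apply_ne_zero {f : V → Bool} (h : vac V f ≠ 0) : f = fun _ => false :=
  of_not_not fun hf => h (if_neg hf)

variable [DecidableEq V]

lemma apply_eq_sum_basisVec (K : Module.End ℂ (QState V)) (ψ : QState V) (g : V → Bool) :
    K ψ g = ∑ f, ψ f * K (basisVec f) g := by
  conv_lhs => rw [← Finset.univ_sum_single ψ]
  refine (congrFun (map_sum K _ _) g).trans ?_
  rw [Finset.sum_apply]
  refine Finset.sum_congr rfl fun f _ => ?_
  rw [basisVec_eq_single, ← smul_eq_mul, ← Pi.smul_apply, ← map_smul, ← Pi.single_smul',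
    smul_eq_mul, mul_one]

lemma ext_basisVec {K K' : Module.End ℂ (QState V)}
    (h : ∀ f g, K (basisVec f) g = K' (basisVec f) g) : K = K' :=
  LinearMap.ext fun ψ => funext fun g => by
    simp only [apply_eq_sum_basisVec _ ψ, h]

lemma creProd_empty : creProd (∅ : Finset V) = 1 := Finset.noncommProd_empty _ _

lemma creProd_insert {j : V} {Y : Finset V} (hj : j ∉ Y) :
    creProd (insert j Y) = creOp j * creProd Y :=
  Finset.noncommProd_insert_of_notMem _ _ _ _ hj

lemma creProd_apply (Y : Finset V) (ψ : QState V) (g : V → Bool) :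
    creProd Y ψ g =
      if ∀ j ∈ Y, g j = true then ψ (Y.piecewise (fun _ => false) g) else 0 := by
  induction Y using Finset.induction_on generalizing g with
  | empty => simp [creProd_empty]
  | @insert j Y hj ih =>
    have hY : (∀ i ∈ Y, Function.update g j false i = true) ↔ ∀ i ∈ Y, g i = true :=
      forall₂_congr fun i hi => by rw [Function.update_of_ne (ne_of_mem_of_not_mem hi hj)]
    rw [creProd_insert hj, Module.End.mul_apply, creOp_apply, ih, Finset.piecewise_insert,
      Finset.update_piecewise_of_notMem _ _ _ hj]
    simp only [hY, Finset.forall_mem_insert, ite_and]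

lemma creProd_basisVec (B : Finset V) (f : V → Bool) :
    creProd B (basisVec f) =
      if ∀ i ∈ B, f i = false then basisVec (B.piecewise (fun _ => true) f) else 0 := by
  funext g
  have key : ((∀ j ∈ B, g j = true) ∧ B.piecewise (fun _ => false) g = f) ↔
      ((∀ i ∈ B, f i = false) ∧ g = B.piecewise (fun _ => true) f) := by
    simp only [funext_iff, Finset.piecewise]
    grind
  rw [creProd_apply]
  unfold basisVec
  split_ifs <;> simp_all

end Configurations

namespace SupportedOn

variable {V : Type*} [Fintype V] {K : Module.End ℂ (QState V)} {S : Set V}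

lemma apply_basisVec_congr (hK : SupportedOn K S) {f f' g g' : V → Bool}
    (hf : ∀ i ∈ S, f i = f' i) (hg : ∀ i ∈ S, g i = g' i)
    (hfg : ∀ i ∉ S, (f i = g i ↔ f' i = g' i)) :
    K (basisVec f) g = K (basisVec f') g' := by
  by_cases h : ∀ i ∉ S, f i = g i
  · exact hK.2 f f' g g' hf hg h fun i hi => (hfg i hi).1 (h i hi)
  · push Not at h
    obtain ⟨i, hi, hne⟩ := h
    rw [hK.1 f g ⟨i, hi, hne⟩, hK.1 f' g' ⟨i, hi, mt (hfg i hi).2 hne⟩]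

lemma sub {K' : Module.End ℂ (QState V)} (hK : SupportedOn K S) (hK' : SupportedOn K' S) :
    SupportedOn (K - K') S :=
  ⟨fun f g h => by simp [hK.1 f g h, hK'.1 f g h], fun f f' g g' h₁ h₂ h₃ h₄ => by
    simp [hK.2 f f' g g' h₁ h₂ h₃ h₄, hK'.2 f f' g g' h₁ h₂ h₃ h₄]⟩

variable [DecidableEq V]

lemma apply_eq_zero (hK : SupportedOn K S) {ψ : QState V} {g : V → Bool}
    (h : ∀ f, ψ f ≠ 0 → ∃ i ∉ S, f i ≠ g i) : K ψ g = 0 := by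
  rw [apply_eq_sum_basisVec]
  refine Finset.sum_eq_zero fun f _ => ?_
  by_cases hf : ψ f = 0
  · rw [hf, zero_mul]
  · rw [hK.1 f g (h f hf), mul_zero]

lemma mul_creProd (hK : SupportedOn K S) (B : Finset V) :
    SupportedOn (K * creProd B) (S ∪ B) := by
  constructor
  · rintro f g ⟨i, hi, hne⟩
    simp only [Set.mem_union, Finset.mem_coe, not_or] at hi
    rw [Module.End.mul_apply, creProd_basisVec]
    split_ifs
    · exact hK.1 _ _ ⟨i, hi.1, by simpa [hi.2] using hne⟩
    · simp
  · intro f f' g g' hf hg hfg hf'g'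
    have hB : (∀ i ∈ B, f i = false) ↔ ∀ i ∈ B, f' i = false :=
      forall₂_congr fun i hi => by rw [hf i (Or.inr hi)]
    simp only [Module.End.mul_apply, creProd_basisVec, hB]
    split_ifs
    · refine hK.apply_basisVec_congr (fun i hi => ?_) (fun i hi => hg i (Or.inl hi)) fun i hi => ?_
      · by_cases hiB : i ∈ B <;> simp [hiB, hf i (Or.inl hi)]
      · by_cases hiB : i ∈ B
        · simp [hiB, hg i (Or.inr hiB)]
        · simp [hiB, hfg i (by simp [hi, hiB]), hf'g' i (by simp [hi, hiB])]
    · simp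

lemma creProd_mul (hK : SupportedOn K S) (B : Finset V) :
    SupportedOn (creProd B * K) (S ∪ B) := by
  constructor
  · rintro f g ⟨i, hi, hne⟩
    simp only [Set.mem_union, Finset.mem_coe, not_or] at hi
    rw [Module.End.mul_apply, creProd_apply]
    split_ifs
    · exact hK.1 _ _ ⟨i, hi.1, by simpa [hi.2] using hne⟩
    · rfl
  · intro f f' g g' hf hg hfg hf'g'
    have hB : (∀ i ∈ B, g i = true) ↔ ∀ i ∈ B, g' i = true :=
      forall₂_congr fun i hi => by rw [hg i (Or.inr hi)]
    simp only [Module.End.mul_apply, creProd_apply, hB]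
    split_ifs
    · refine hK.apply_basisVec_congr (fun i hi => hf i (Or.inl hi)) (fun i hi => ?_) fun i hi => ?_
      · by_cases hiB : i ∈ B <;> simp [hiB, hg i (Or.inl hi)]
      · by_cases hiB : i ∈ B
        · simp [hiB, hf i (Or.inr hiB)]
        · simp [hiB, hfg i (by simp [hi, hiB]), hf'g' i (by simp [hi, hiB])]
    · rfl

lemma commute_creProd (hK : SupportedOn K S) {B : Finset V} (hB : Disjoint (B : Set V) S) :
    Commute K (creProd B) := by
  refine ext_basisVec fun f g => ?_
  have hBS : ∀ i ∈ B, i ∉ S := fun i hi => Set.disjoint_left.mp hB hi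
  simp only [Module.End.mul_apply, creProd_basisVec, creProd_apply]
  split_ifs with hf hg hg
  · refine hK.apply_basisVec_congr (fun i hi => ?_) (fun i hi => ?_) fun i hi => ?_
    · simp [show i ∉ B from fun h => hBS i h hi]
    · simp [show i ∉ B from fun h => hBS i h hi]
    · by_cases hiB : i ∈ B <;> simp [hiB, hf, hg]
  · push Not at hg
    obtain ⟨i, hi, hgi⟩ := hg
    exact hK.1 _ _ ⟨i, hBS i hi, by simpa [hi] using hgi.symm⟩
  · push Not at hf
    obtain ⟨i, hi, hfi⟩ := hf
    rw [map_zero]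
    exact (hK.1 _ _ ⟨i, hBS i hi, by simpa [hi] using hfi⟩).symm
  · simp

end SupportedOn

section Graph

variable {V : Type*} {G : SimpleGraph V}

namespace WithinDist

lemma refl (r : ℕ) (v : V) : WithinDist G r v v := ⟨.nil, Nat.zero_le r⟩

lemma symm {r : ℕ} {a b : V} (h : WithinDist G r a b) : WithinDist G r b a :=
  let ⟨w, hw⟩ := h
  ⟨w.reverse, by rwa [SimpleGraph.Walk.length_reverse]⟩

lemma mono {r s : ℕ} (hrs : r ≤ s) {a b : V} (h : WithinDist G r a b) : WithinDist G s a b :=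
  let ⟨w, hw⟩ := h
  ⟨w, hw.trans hrs⟩

lemma trans {r s : ℕ} {a b c : V} (h₁ : WithinDist G r a b) (h₂ : WithinDist G s b c) :
    WithinDist G (r + s) a c :=
  let ⟨w₁, hw₁⟩ := h₁
  let ⟨w₂, hw₂⟩ := h₂
  ⟨w₁.append w₂, by rw [SimpleGraph.Walk.length_append]; omega⟩

end WithinDist

variable [Fintype V]

variable (G) in
open scoped Classical in
noncomputable def ballFinset (v : V) (r : ℕ) : Finset V := Finset.univ.filter (WithinDist G r v)

lemma mem_ballFinset {v j : V} {r : ℕ} : j ∈ ballFinset G v r ↔ WithinDist G r v j := by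
  simp [ballFinset]

variable [DecidableEq V] [DecidableRel G.Adj]

variable (G) in
def closedNeighborFinset (v : V) : Finset V := insert v (G.neighborFinset v)

lemma Qnn_eq_sum : Qnn G = ∑ v, creProd (closedNeighborFinset G v) := rfl

lemma self_mem_closedNeighborFinset (v : V) : v ∈ closedNeighborFinset G v :=
  Finset.mem_insert_self v _

lemma withinDist_of_mem_closedNeighborFinset {v i : V} (h : i ∈ closedNeighborFinset G v) :
    WithinDist G 1 v i := by
  rcases Finset.mem_insert.mp h with rfl | h
  · exact .refl 1 i
  · exact ⟨((G.mem_neighborFinset v i).mp h).toWalk, le_rfl⟩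

lemma SimpleGraph.IsRegularOfDegree.card_closedNeighborFinset {Δ : ℕ}
    (hG : G.IsRegularOfDegree Δ) (v : V) : (closedNeighborFinset G v).card = Δ + 1 := by
  rw [closedNeighborFinset, Finset.card_insert_of_notMem (G.notMem_neighborFinset_self v),
    G.card_neighborFinset_eq_degree, hG v]

lemma ballFinset_succ_subset (v : V) (r : ℕ) :
    ballFinset G v (r + 1) ⊆ (closedNeighborFinset G v).biUnion (ballFinset G · r) := by
  intro j hj
  obtain ⟨w, hw⟩ := mem_ballFinset.mp hj
  rw [Finset.mem_biUnion]
  cases w with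
  | nil => exact ⟨v, self_mem_closedNeighborFinset v, mem_ballFinset.mpr (.refl r v)⟩
  | cons hadj p =>
    rw [SimpleGraph.Walk.length_cons] at hw
    exact ⟨_, Finset.mem_insert_of_mem ((G.mem_neighborFinset _ _).mpr hadj),
      mem_ballFinset.mpr ⟨p, by omega⟩⟩

lemma SimpleGraph.IsRegularOfDegree.card_ballFinset_le {Δ : ℕ} (hG : G.IsRegularOfDegree Δ)
    (r : ℕ) (v : V) : (ballFinset G v r).card ≤ (Δ + 1) ^ r := by
  induction r generalizing v with
  | zero =>
    refine (Finset.card_le_one.mpr fun a ha b hb => ?_).trans (pow_zero _).ge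
    obtain ⟨wa, hwa⟩ := mem_ballFinset.mp ha
    obtain ⟨wb, hwb⟩ := mem_ballFinset.mp hb
    exact (SimpleGraph.Walk.eq_of_length_eq_zero (Nat.le_zero.mp hwa)).symm.trans
      (SimpleGraph.Walk.eq_of_length_eq_zero (Nat.le_zero.mp hwb))
  | succ r ih =>
    calc (ballFinset G v (r + 1)).card
        ≤ (closedNeighborFinset G v).card * (Δ + 1) ^ r :=
          (Finset.card_le_card (ballFinset_succ_subset v r)).trans
            (Finset.card_biUnion_le_card_mul _ _ _ fun u _ => ih u)
      _ = (Δ + 1) ^ (r + 1) := by rw [hG.card_closedNeighborFinset, pow_succ']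

lemma SimpleGraph.IsRegularOfDegree.exists_separated {Δ : ℕ} (hG : G.IsRegularOfDegree Δ)
    (L : ℕ) : ∀ t, t * (Δ + 1) ^ L < Fintype.card V →
      ∃ T : Finset V, T.card = t ∧ (T : Set V).Pairwise fun a b => ¬ WithinDist G L a b := by
  intro t
  induction t with
  | zero => exact fun _ => ⟨∅, rfl, by simp⟩
  | succ t ih =>
    intro ht
    obtain ⟨T, hTcard, hT⟩ := ih (lt_of_le_of_lt (Nat.mul_le_mul_right _ t.le_succ) ht)
    have hcover : (T.biUnion (ballFinset G · L)).card < (Finset.univ : Finset V).card :=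
      calc (T.biUnion (ballFinset G · L)).card ≤ T.card * (Δ + 1) ^ L :=
            Finset.card_biUnion_le_card_mul _ _ _ fun a _ => hG.card_ballFinset_le L a
        _ < _ := by rw [hTcard, Finset.card_univ]; exact lt_of_le_of_lt (by gcongr; omega) ht
    obtain ⟨v, -, hv⟩ := Finset.exists_mem_notMem_of_card_lt_card hcover
    have hfar : ∀ a ∈ T, ¬ WithinDist G L a v := fun a ha h =>
      hv (Finset.mem_biUnion.mpr ⟨a, ha, mem_ballFinset.mpr h⟩)
    have hvT : v ∉ T := fun h => hfar v h (.refl L v)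
    refine ⟨insert v T, by rw [Finset.card_insert_of_notMem hvT, hTcard], ?_⟩
    rw [Finset.coe_insert, Set.pairwise_insert]
    exact ⟨hT, fun a ha _ => ⟨fun h => hfar a ha h.symm, hfar a ha⟩⟩

end Graph

section LocalOperators

variable {V : Type*} [Fintype V] {G : SimpleGraph V}

variable (G) in
def localOps (n D : ℕ) : Submodule ℂ (Module.End ℂ (QState V)) :=
  Submodule.span ℂ {O | ∃ Y : Finset V, SupportedOn O Y ∧ Y.card ≤ n ∧
    ∀ a ∈ Y, ∀ b ∈ Y, WithinDist G D a b}

lemma IsKLocalRangeHam.mem_localOps {k R : ℕ} {H : Module.End ℂ (QState V)}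
    (hH : IsKLocalRangeHam G k R H) : H ∈ localOps G k (R - 1) := by
  obtain ⟨h, hsupp, hsmall, rfl⟩ := hH
  refine Submodule.sum_mem _ fun X _ => ?_
  by_cases hX : h X = 0
  · rw [hX]
    exact Submodule.zero_mem _
  · obtain ⟨-, hdiam, hcard⟩ := hsmall X hX
    exact Submodule.subset_span ⟨X, hsupp X, hcard, hdiam⟩

variable [DecidableEq V]

lemma apply_eq_zero_of_mem_localOps {n D : ℕ} {O : Module.End ℂ (QState V)}
    (hO : O ∈ localOps G n D) {ψ : QState V} {g : V → Bool}
    (h : ∀ Y : Finset V, Y.card ≤ n → (∀ a ∈ Y, ∀ b ∈ Y, WithinDist G D a b) →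
      ∀ f, ψ f ≠ 0 → ∃ i ∉ (Y : Set V), f i ≠ g i) :
    O ψ g = 0 := by
  induction hO using Submodule.span_induction with
  | mem O hO =>
    obtain ⟨Y, hsupp, hcard, hdiam⟩ := hO
    exact hsupp.apply_eq_zero (h Y hcard hdiam)
  | zero => rfl
  | add O O' _ _ hO hO' => simp [hO, hO']
  | smul a O _ hO => simp [hO]

variable [DecidableRel G.Adj]

lemma commutator_creProd_mem_localOps {Δ n D : ℕ} (hG : G.IsRegularOfDegree Δ)
    {O : Module.End ℂ (QState V)} {Y : Finset V} (hO : SupportedOn O Y) (hcard : Y.card ≤ n)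
    (hdiam : ∀ a ∈ Y, ∀ b ∈ Y, WithinDist G D a b) (v : V) :
    O * creProd (closedNeighborFinset G v) - creProd (closedNeighborFinset G v) * O ∈
      localOps G (n + Δ) (D + 2) := by
  set B := closedNeighborFinset G v
  by_cases hdisj : Disjoint B Y
  · rw [sub_eq_zero.mpr (hO.commute_creProd (by exact_mod_cast hdisj)).eq]
    exact Submodule.zero_mem _
  obtain ⟨w, hwB, hwY⟩ := Finset.not_disjoint_iff.mp hdisj
  have hvB : ∀ a ∈ B, WithinDist G 1 v a := fun _ => withinDist_of_mem_closedNeighborFinset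
  refine Submodule.subset_span ⟨Y ∪ B, ?_, ?_, ?_⟩
  · rw [Finset.coe_union]
    exact (hO.mul_creProd B).sub (hO.creProd_mul B)
  · calc (Y ∪ B).card ≤ (Y ∪ B.erase w).card :=
          Finset.card_le_card fun i hi => by
            rcases eq_or_ne i w with rfl | hiw
            · exact Finset.mem_union_left _ hwY
            · simpa [hiw] using hi
      _ ≤ Y.card + (B.erase w).card := Finset.card_union_le _ _
      _ ≤ n + Δ := by
          rw [Finset.card_erase_of_mem hwB, hG.card_closedNeighborFinset]
          omega
  · intro a ha b hb
    rcases Finset.mem_union.mp ha with ha | ha <;> rcases Finset.mem_union.mp hb with hb | hb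
    · exact (hdiam a ha b hb).mono (by omega)
    · exact ((hdiam a ha w hwY).trans ((hvB w hwB).symm.trans (hvB b hb))).mono (by omega)
    · exact (((hvB a ha).symm.trans (hvB w hwB)).trans (hdiam w hwY b hb)).mono (by omega)
    · exact ((hvB a ha).symm.trans (hvB b hb)).mono (by omega)

lemma commutator_Qnn_mem_localOps {Δ n D : ℕ} (hG : G.IsRegularOfDegree Δ)
    {O : Module.End ℂ (QState V)} (hO : O ∈ localOps G n D) :
    O * Qnn G - Qnn G * O ∈ localOps G (n + Δ) (D + 2) := by
  induction hO using Submodule.span_induction with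
  | mem O hO =>
    obtain ⟨Y, hsupp, hcard, hdiam⟩ := hO
    rw [Qnn_eq_sum, Finset.mul_sum, Finset.sum_mul, ← Finset.sum_sub_distrib]
    exact Submodule.sum_mem _ fun v _ => commutator_creProd_mem_localOps hG hsupp hcard hdiam v
  | zero => simp
  | add O O' _ _ hO hO' =>
    convert add_mem hO hO' using 1
    noncomm_ring
  | smul a O _ hO =>
    convert Submodule.smul_mem _ a hO using 1
    rw [smul_sub, smul_mul_assoc, mul_smul_comm]

lemma iterate_commutator_Qnn_mem_localOps {Δ n D : ℕ} (hG : G.IsRegularOfDegree Δ)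
    {H : Module.End ℂ (QState V)} (hH : H ∈ localOps G n D) (c : ℕ) :
    (fun X => X * Qnn G - Qnn G * X)^[c] H ∈ localOps G (n + c * Δ) (D + 2 * c) := by
  induction c with
  | zero => simpa using hH
  | succ c ih =>
    rw [Function.iterate_succ_apply']
    convert commutator_Qnn_mem_localOps hG ih using 2 <;> ring

end LocalOperators

section QnnTower

open scoped ComplexOrder

variable {V : Type*} [Fintype V] [DecidableEq V] {G : SimpleGraph V} [DecidableRel G.Adj]

def occupied (g : V → Bool) : Finset V := Finset.univ.filter fun i => g i = true

lemma occupied_piecewise_false (B : Finset V) (g : V → Bool) :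
    occupied (B.piecewise (fun _ => false) g) = occupied g \ B := by
  ext i
  by_cases hi : i ∈ B <;> simp [occupied, hi]

lemma Qnn_apply (ψ : QState V) (g : V → Bool) :
    Qnn G ψ g = ∑ v, if ∀ j ∈ closedNeighborFinset G v, g j = true then
      ψ ((closedNeighborFinset G v).piecewise (fun _ => false) g) else 0 := by
  simp only [Qnn_eq_sum, LinearMap.sum_apply, Finset.sum_apply, creProd_apply]

lemma Qnn_pow_succ_apply (p : ℕ) (ψ : QState V) :
    (Qnn G ^ (p + 1)) ψ = Qnn G ((Qnn G ^ p) ψ) := by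
  rw [pow_succ', Module.End.mul_apply]

lemma card_occupied_of_Qnn_pow_vac_ne_zero {Δ : ℕ} (hG : G.IsRegularOfDegree Δ) (p : ℕ)
    {g : V → Bool} (hg : (Qnn G ^ p) (vac V) g ≠ 0) : (occupied g).card = p * (Δ + 1) := by
  induction p generalizing g with
  | zero =>
    rw [eq_false_of_vac_apply_ne_zero hg]
    simp [occupied]
  | succ p ih =>
    rw [Qnn_pow_succ_apply, Qnn_apply] at hg
    obtain ⟨v, -, hv⟩ := Finset.exists_ne_zero_of_sum_ne_zero hg
    split_ifs at hv with hB
    · have hsub : closedNeighborFinset G v ⊆ occupied g := fun i hi => by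
        simpa [occupied] using hB i hi
      rw [← Finset.card_sdiff_add_card_eq_card hsub, ← occupied_piecewise_false, ih hv,
        hG.card_closedNeighborFinset]
      ring
    · exact absurd rfl hv

lemma Qnn_pow_vac_nonneg (p : ℕ) (g : V → Bool) : 0 ≤ (Qnn G ^ p) (vac V) g := by
  induction p generalizing g with
  | zero =>
    simp only [pow_zero, Module.End.one_apply, vac, basisVec]
    split_ifs <;> norm_num
  | succ p ih =>
    rw [Qnn_pow_succ_apply, Qnn_apply]
    exact Finset.sum_nonneg fun v _ => by split_ifs; exacts [ih _, le_rfl]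

lemma Qnn_pow_vac_pos {T : Finset V} (hT : (T : Set V).PairwiseDisjoint (closedNeighborFinset G)) :
    0 < (Qnn G ^ T.card) (vac V) fun i => decide (i ∈ T.biUnion (closedNeighborFinset G)) := by
  induction T using Finset.induction_on with
  | empty => simp [vac, basisVec]
  | @insert a T ha ih =>
    rw [Finset.coe_insert, Set.pairwiseDisjoint_insert_of_notMem (by exact_mod_cast ha)] at hT
    rw [Finset.card_insert_of_notMem ha, Qnn_pow_succ_apply, Qnn_apply]
    refine Finset.sum_pos' (fun v _ => ?_) ⟨a, Finset.mem_univ a, ?_⟩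
    · split_ifs
      exacts [Qnn_pow_vac_nonneg _ _, le_rfl]
    · rw [if_pos fun j hj => by simp [Finset.biUnion_insert, hj]]
      convert ih hT.1 using 2
      funext i
      by_cases hi : i ∈ closedNeighborFinset G a
      · have : i ∉ T.biUnion (closedNeighborFinset G) := by
          simp only [Finset.mem_biUnion, not_exists, not_and]
          exact fun b hb hib => Finset.disjoint_left.mp (hT.2 b hb) hi hib
        simp [hi, this]
      · simp [hi, Finset.biUnion_insert]

end QnnTower

section EqualSpacing

open scoped ComplexOrder fwdDiff

variable {V : Type*} [Fintype V] [DecidableEq V] {G : SimpleGraph V} [DecidableRel G.Adj]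
  {Δ k D : ℕ} {H : Module.End ℂ (QState V)} {E : ℕ → ℂ}

lemma iterate_fwdDiff_eq_zero_of_lt (hG : G.IsRegularOfDegree Δ) (hH : H ∈ localOps G k D)
    (hE : ∀ p, (Qnn G ^ p) (vac V) ≠ 0 →
      H ((Qnn G ^ p) (vac V)) = E p • (Qnn G ^ p) (vac V))
    {c p : ℕ} (hc : k < c) (hW : (Qnn G ^ (p + c)) (vac V) ≠ 0) :
    (Δ_[1])^[c] E p = 0 := by
  obtain ⟨g, hg⟩ := Function.ne_iff.mp hW
  refine iterate_fwdDiff_eq_zero_of_apply_eq_zero hE hg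
    (apply_eq_zero_of_mem_localOps (iterate_commutator_Qnn_mem_localOps hG hH c) ?_)
  -- a term on `Y` occupies at most `|Y| ≤ k + c Δ` new sites, fewer than the `c (Δ + 1)` needed
  intro Y hY _ f hf
  by_contra! hfg
  have hsub : occupied g ⊆ occupied f ∪ Y := fun i hi => by
    by_cases hiY : i ∈ Y
    · exact Finset.mem_union_right _ hiY
    · refine Finset.mem_union_left _ ?_
      simpa [occupied, hfg i hiY] using hi
  have := (Finset.card_le_card hsub).trans (Finset.card_union_le _ _)
  rw [card_occupied_of_Qnn_pow_vac_ne_zero hG _ hg,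
    card_occupied_of_Qnn_pow_vac_ne_zero hG _ hf] at this
  nlinarith

lemma iterate_fwdDiff_apply_zero_eq_zero_of_le (hG : G.IsRegularOfDegree Δ)
    (hH : H ∈ localOps G k D)
    (hE : ∀ p, (Qnn G ^ p) (vac V) ≠ 0 →
      H ((Qnn G ^ p) (vac V)) = E p • (Qnn G ^ p) (vac V))
    (hN : k * (Δ + 1) ^ (D + 2 * k) < Fintype.card V) {c : ℕ} (hc : 2 ≤ c) (hck : c ≤ k) :
    (Δ_[1])^[c] E 0 = 0 := by
  obtain ⟨T, hTc, hT⟩ := hG.exists_separated (D + 2 * k) c (lt_of_le_of_lt (by gcongr) hN)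
  have hdisj : (T : Set V).PairwiseDisjoint (closedNeighborFinset G) := fun a ha b hb hab =>
    Finset.disjoint_left.mpr fun i hia hib => hT ha hb hab <|
      ((withinDist_of_mem_closedNeighborFinset hia).trans
        (withinDist_of_mem_closedNeighborFinset hib).symm).mono (by omega)
  have hpos := Qnn_pow_vac_pos hdisj
  rw [hTc] at hpos
  refine iterate_fwdDiff_eq_zero_of_apply_eq_zero hE (p := 0) (by rw [zero_add]; exact hpos.ne')
    (apply_eq_zero_of_mem_localOps (iterate_commutator_Qnn_mem_localOps hG hH c) ?_)
  -- starting from the vacuum, a term on `Y` would have to occupy two far-apart centres in `T`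
  intro Y _ hY f hf
  rw [pow_zero, Module.End.one_apply] at hf
  obtain ⟨a, ha, b, hb, hab⟩ := Finset.one_lt_card.mp (by omega : 1 < T.card)
  by_contra! hfg
  have hTY : ∀ x ∈ T, x ∈ Y := fun x hx => by
    by_contra hxY
    have := hfg x hxY
    rw [eq_false_of_vac_apply_ne_zero hf] at this
    simp only [Bool.false_eq, decide_eq_false_iff_not, Finset.mem_biUnion, not_exists,
      not_and] at this
    exact this x hx (self_mem_closedNeighborFinset x)
  exact hT ha hb hab ((hY a (hTY a ha) b (hTY b hb)).mono (by omega))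

end EqualSpacing

/-- Equal spacing for the tower generated by `Q†_{nn}` on connected Δ-regular
graphs with pairwise distinct closed neighborhoods, for k-local Hamiltonians of range R,
once `N > C(Δ,k,R)`. -/
theorem Qnn_tower_equal_spacing :
    ∃ C : ℕ × ℕ × ℕ → ℕ,
      ∀ (Δ k R : ℕ), 0 < Δ → 0 < k → 0 < R →
      ∀ (V : Type) (_ : Fintype V) (_ : DecidableEq V)
        (G : SimpleGraph V) (_ : DecidableRel G.Adj),
        G.Connected →
        C (Δ, k, R) < Fintype.card V →
        (∀ v : V, G.degree v = Δ) →
        Function.Injective (fun i : V => insert i (G.neighborFinset i)) →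
        ∀ H : Module.End ℂ (QState V),
          IsKLocalRangeHam G k R H →
          ∀ E : ℕ → ℂ,
            (∀ p : ℕ, ((Qnn G) ^ p) (vac V) ≠ 0 →
              H (((Qnn G) ^ p) (vac V)) = E p • ((Qnn G) ^ p) (vac V)) →
            ∃ Ω ω : ℂ, ∀ p : ℕ, ((Qnn G) ^ p) (vac V) ≠ 0 → E p = Ω + ω * p := by
  refine ⟨fun t => t.2.1 * (t.1 + 1) ^ (t.2.2 - 1 + 2 * t.2.1), ?_⟩
  intro Δ k R _ _ _ V _ _ G _ _ hN hG _ H hH E hE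
  have hloc := hH.mem_localOps
  have hm : ∀ p, (Qnn G ^ (p + 1)) (vac V) ≠ 0 → (Qnn G ^ p) (vac V) ≠ 0 :=
    fun p => pow_apply_ne_zero_of_le p.le_succ
  have hlarge :
      ∀ c, k < c → ∀ p, (Qnn G ^ (p + c)) (vac V) ≠ 0 → (fwdDiff 1)^[c] E p = 0 :=
    fun c hc p => iterate_fwdDiff_eq_zero_of_lt hG hloc hE hc
  have hzero : ∀ c, 2 ≤ c → (Qnn G ^ c) (vac V) ≠ 0 → (fwdDiff 1)^[c] E 0 = 0 :=
    fun c hc hW => (le_or_gt c k).elim (iterate_fwdDiff_apply_zero_eq_zero_of_le hG hloc hE hN hc)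
      fun hkc => hlarge c hkc 0 (by rwa [zero_add])
  exact exists_affine_of_fwdDiff_fwdDiff_eq_zero hm
    (iterate_fwdDiff_eq_zero_of_apply_zero hm k hzero hlarge 2 le_rfl)
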